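/- arXiv:2206.10444 — 5 statements merged into one kernel-verified Lean document; each statement's English description precedes it below -/
import Mathlib

section
/- Let A be an n×n real matrix with A + Aᵀ positive semidefinite, and let U be an n×k real matrix with γ > 0. Then A + γUUᵀ is nonsingular if and only if Ker(A) ∩ Ker(Uᵀ) = {0}. -/
/-!
Since `A + Aᵀ` is positive semidefinite, the quadratic form `x ↦ xᵀ A x` is nonnegative, and
`xᵀ (A + γ U Uᵀ) x = xᵀ A x + γ ‖Uᵀ x‖²` is a sum of two nonnegative terms. Hence
`(A + γ U Uᵀ) x = 0` forces `Uᵀ x = 0` and then `A x = 0`: the kernel of `A + γ U Uᵀ` is exactly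
`Ker A ∩ Ker Uᵀ`, and a square matrix is invertible iff its kernel is trivial.
-/

open Matrix

namespace Matrix

variable {ι κ R : Type*} [Fintype ι] [Fintype κ]

lemma dotProduct_mul_transpose_mulVec [CommSemiring R] (U : Matrix ι κ R) (x : ι → R) :
    x ⬝ᵥ ((U * Uᵀ) *ᵥ x) = (Uᵀ *ᵥ x) ⬝ᵥ (Uᵀ *ᵥ x) := by
  rw [← mulVec_mulVec, dotProduct_mulVec, ← mulVec_transpose]

variable [CommRing R] [LinearOrder R] [IsStrictOrderedRing R]

lemma dotProduct_mulVec_nonneg_of_posSemidef_add_transpose [StarRing R] [TrivialStar R]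
    {A : Matrix ι ι R} (hA : (A + Aᵀ).PosSemidef) (x : ι → R) : 0 ≤ x ⬝ᵥ (A *ᵥ x) := by
  have h := hA.dotProduct_mulVec_nonneg x
  rw [star_trivial, add_mulVec, dotProduct_add, dotProduct_transpose_mulVec A x x, ← two_mul] at h
  exact nonneg_of_mul_nonneg_right h two_pos

lemma add_smul_mul_transpose_mulVec_eq_zero_iff {A : Matrix ι ι R} {U : Matrix ι κ R} {γ : R}
    {x : ι → R} (hA : ∀ y, 0 ≤ y ⬝ᵥ (A *ᵥ y)) (hγ : 0 < γ) :
    (A + γ • (U * Uᵀ)) *ᵥ x = 0 ↔ A *ᵥ x = 0 ∧ Uᵀ *ᵥ x = 0 := by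
  have hsplit : (A + γ • (U * Uᵀ)) *ᵥ x = A *ᵥ x + γ • (U *ᵥ (Uᵀ *ᵥ x)) := by
    rw [add_mulVec, smul_mulVec, mulVec_mulVec]
  refine ⟨fun hx ↦ ?_, fun ⟨hAx, hUx⟩ ↦ by simp [hsplit, hAx, hUx]⟩
  have hquad : x ⬝ᵥ (A *ᵥ x) + γ * ((Uᵀ *ᵥ x) ⬝ᵥ (Uᵀ *ᵥ x)) = 0 := by
    rw [← dotProduct_mul_transpose_mulVec, ← smul_eq_mul, ← dotProduct_smul, ← dotProduct_add,
      ← smul_mulVec, ← add_mulVec, hx, dotProduct_zero]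
  have hUx : Uᵀ *ᵥ x = 0 := by
    have hnorm : 0 ≤ (Uᵀ *ᵥ x) ⬝ᵥ (Uᵀ *ᵥ x) := Fintype.sum_nonneg fun _ ↦ mul_self_nonneg _
    rw [← dotProduct_self_eq_zero]
    nlinarith [hA x]
  exact ⟨by simpa [hsplit, hUx] using hx, hUx⟩

end Matrix

theorem stmt_0 {n k : ℕ} (A : Matrix (Fin n) (Fin n) ℝ)
    (U : Matrix (Fin n) (Fin k) ℝ) (γ : ℝ) (hγ : 0 < γ)
    (hA : (A + Aᵀ).PosSemidef) :
    IsUnit (A + γ • (U * Uᵀ)) ↔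
      ∀ x : Fin n → ℝ, A *ᵥ x = 0 → Uᵀ *ᵥ x = 0 → x = 0 := by
  have hker (x : Fin n → ℝ) := add_smul_mul_transpose_mulVec_eq_zero_iff (U := U) (x := x)
    (dotProduct_mulVec_nonneg_of_posSemidef_add_transpose hA) hγ
  rw [isUnit_iff_isUnit_det, isUnit_iff_ne_zero, Ne, ← exists_mulVec_eq_zero_iff]
  simp only [hker]
  grind
end

section
/- (Kellogg's Lemma) If A ∈ ℝ^{n×n} has positive definite symmetric part (i.e., A + Aᵀ is positive definite), then for every α > 0, the spectral norm of (αI − A)(αI + A)^{-1} is strictly less than 1. -/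
/-!
Write `B = αI + A` and `C = αI - A`. For `y ≠ 0`,
`‖B y‖² - ‖C y‖² = 4α ⟪y, A y⟫ = 2α ⟪y, (A + Aᵀ) y⟫ > 0`. Hence `B` is injective, and
`x = B y` gives `‖C B⁻¹ x‖ < ‖x‖` for every `x ≠ 0`. In finite dimension the maximum of
`‖C B⁻¹ x‖` over the compact unit sphere is attained, so the operator norm is `< 1`.
-/

open Matrix
open scoped RealInnerProductSpace

/-- The spectral (operator 2-) norm of a real square matrix. -/
noncomputable def spec2Norm {n : ℕ} (M : Matrix (Fin n) (Fin n) ℝ) : ℝ :=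
  ‖Matrix.toEuclideanCLM (𝕜 := ℝ) M‖

theorem ContinuousLinearMap.norm_lt_one_of_norm_apply_lt {𝕜 E F : Type*} [RCLike 𝕜]
    [NormedAddCommGroup E] [NormedSpace 𝕜 E] [ProperSpace E]
    [SeminormedAddCommGroup F] [NormedSpace 𝕜 F]
    (T : E →L[𝕜] F) (hT : ∀ x ≠ 0, ‖T x‖ < ‖x‖) : ‖T‖ < 1 := by
  rw [← T.sSup_sphere_eq_norm]
  rcases (Metric.sphere (0 : E) 1).eq_empty_or_nonempty with hS | hS
  · simp [hS]
  rw [(isCompact_sphere 0 1).sSup_lt_iff_of_continuous hS (by fun_prop)]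
  intro x hx
  have hx₁ : ‖x‖ = 1 := mem_sphere_zero_iff_norm.mp hx
  simpa [hx₁] using hT x (ne_zero_of_norm_ne_zero (by simp [hx₁]))

theorem norm_sub_lt_norm_add_of_inner_pos {F : Type*} [NormedAddCommGroup F]
    [InnerProductSpace ℝ F] {u v : F} (h : 0 < ⟪u, v⟫) : ‖u - v‖ < ‖u + v‖ := by
  refine lt_of_pow_lt_pow_left₀ 2 (norm_nonneg _) ?_
  rw [norm_sub_sq_real, norm_add_sq_real]
  linarith

namespace Matrix

variable {ι : Type*} [Fintype ι] [DecidableEq ι]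

theorem inner_toEuclideanCLM_self_pos {A : Matrix ι ι ℝ} (hA : (A + Aᵀ).PosDef)
    {y : EuclideanSpace ℝ ι} (hy : y ≠ 0) : 0 < ⟪y, toEuclideanCLM (𝕜 := ℝ) A y⟫ := by
  have hpos := hA.dotProduct_mulVec_pos (x := WithLp.ofLp y) (by simpa using hy)
  have htranspose : y.ofLp ⬝ᵥ Aᵀ *ᵥ y.ofLp = y.ofLp ⬝ᵥ A *ᵥ y.ofLp := by
    rw [dotProduct_mulVec, vecMul_transpose, dotProduct_comm]
  rw [star_trivial, add_mulVec, dotProduct_add, htranspose] at hpos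
  rw [inner_toEuclideanCLM]
  linarith

theorem norm_toEuclideanCLM_sub_lt_add {A : Matrix ι ι ℝ} (hA : (A + Aᵀ).PosDef)
    {α : ℝ} (hα : 0 < α) {y : EuclideanSpace ℝ ι} (hy : y ≠ 0) :
    ‖toEuclideanCLM (𝕜 := ℝ) (α • 1 - A) y‖ < ‖toEuclideanCLM (𝕜 := ℝ) (α • 1 + A) y‖ := by
  simp only [map_sub, map_add, map_smul, map_one, _root_.sub_apply, _root_.add_apply,
    _root_.smul_apply, one_apply_eq_self]
  apply norm_sub_lt_norm_add_of_inner_pos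
  rw [real_inner_smul_left]
  exact mul_pos hα (inner_toEuclideanCLM_self_pos hA hy)

theorem isUnit_of_norm_toEuclideanCLM_lt {B C : Matrix ι ι ℝ}
    (h : ∀ y : EuclideanSpace ℝ ι, y ≠ 0 →
      ‖toEuclideanCLM (𝕜 := ℝ) C y‖ < ‖toEuclideanCLM (𝕜 := ℝ) B y‖) :
    IsUnit B := by
  rw [← mulVec_injective_iff_isUnit, ← coe_mulVecLin, ← LinearMap.ker_eq_bot,
    ker_mulVecLin_eq_bot_iff]
  intro v hv
  by_contra hne
  have hlt := h (WithLp.toLp 2 v) (by simpa using hne)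
  rw [toEuclideanCLM_toLp B, hv, WithLp.toLp_zero, norm_zero] at hlt
  exact (norm_nonneg _).not_gt hlt

end Matrix

theorem spec2Norm_mul_inv_lt_one {n : ℕ} {B C : Matrix (Fin n) (Fin n) ℝ}
    (h : ∀ y : EuclideanSpace ℝ (Fin n), y ≠ 0 →
      ‖toEuclideanCLM (𝕜 := ℝ) C y‖ < ‖toEuclideanCLM (𝕜 := ℝ) B y‖) :
    spec2Norm (C * B⁻¹) < 1 := by
  have hB : B * B⁻¹ = 1 :=
    mul_nonsing_inv B ((isUnit_iff_isUnit_det B).mp (isUnit_of_norm_toEuclideanCLM_lt h))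
  refine ContinuousLinearMap.norm_lt_one_of_norm_apply_lt _ fun x hx => ?_
  set y := toEuclideanCLM (𝕜 := ℝ) B⁻¹ x
  have hBy : toEuclideanCLM (𝕜 := ℝ) B y = x := by
    rw [← mul_apply_eq_comp, ← map_mul, hB, map_one, one_apply_eq_self]
  have hy : y ≠ 0 := by
    rintro hy
    rw [hy, map_zero] at hBy
    exact hx hBy.symm
  calc ‖toEuclideanCLM (𝕜 := ℝ) (C * B⁻¹) x‖ = ‖toEuclideanCLM (𝕜 := ℝ) C y‖ := by
        rw [map_mul, mul_apply_eq_comp]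
    _ < ‖toEuclideanCLM (𝕜 := ℝ) B y‖ := h y hy
    _ = ‖x‖ := by rw [hBy]

theorem stmt_2 {n : ℕ} (A : Matrix (Fin n) (Fin n) ℝ)
    (hA : (A + Aᵀ).PosDef) (α : ℝ) (hα : 0 < α) :
    spec2Norm ((α • (1 : Matrix (Fin n) (Fin n) ℝ) - A) *
      (α • (1 : Matrix (Fin n) (Fin n) ℝ) + A)⁻¹) < 1 :=
  spec2Norm_mul_inv_lt_one fun _ hy => norm_toEuclideanCLM_sub_lt_add hA hα hy
end

section
/- Let A ∈ ℝ^{n×n} with A + Aᵀ positive definite, U ∈ ℝ^{n×k} with k < n, γ > 0, α > 0. Then the spectral radius of T_α = (αI + γUUᵀ)^{-1}(αI − A)(αI + A)^{-1}(αI − γUUᵀ) is strictly less than 1. -/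
/-!
Write `P = αI + S`, `Q = αI + A` with `S = γUUᵀ`. If `T v = μ v`, then `y = Q⁻¹(αI - S) v`
satisfies `Q y = (αI - S) v` and `(αI - A) y = μ P v`. For any `M` with `Re⟪x, M x⟫ ≥ 0` the
identity `‖αx + Mx‖² = ‖αx - Mx‖² + 4α Re⟪x, Mx⟫` shows `‖αx - Mx‖ ≤ ‖αx + Mx‖`, strictly when
`Re⟪x, M x⟫ > 0`. Hence `|μ| ‖P v‖ = ‖(αI - A) y‖ < ‖Q y‖ = ‖(αI - S) v‖ ≤ ‖P v‖`, unless
`y = 0`, in which case `μ = 0`.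
-/

open Matrix

/-- Iteration matrix of the alternating splitting scheme. -/
noncomputable def Titer {n k : ℕ} (A : Matrix (Fin n) (Fin n) ℝ)
    (U : Matrix (Fin n) (Fin k) ℝ) (α γ : ℝ) : Matrix (Fin n) (Fin n) ℝ :=
  (α • 1 + γ • (U * Uᵀ))⁻¹ * (α • 1 - A) * (α • 1 + A)⁻¹ * (α • 1 - γ • (U * Uᵀ))

open RCLike WithLp
open scoped InnerProductSpace

section Accretive
variable {𝕜 E : Type*} [RCLike 𝕜] [NormedAddCommGroup E] [InnerProductSpace 𝕜 E]

theorem norm_smul_add_sq (α : ℝ) (x w : E) :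
    ‖(α : 𝕜) • x + w‖ ^ 2 = ‖(α : 𝕜) • x - w‖ ^ 2 + 4 * α * re ⟪x, w⟫_𝕜 := by
  rw [norm_add_sq (𝕜 := 𝕜), norm_sub_sq (𝕜 := 𝕜), inner_smul_left, conj_ofReal, re_ofReal_mul]
  ring

theorem norm_smul_sub_le_norm_smul_add {α : ℝ} (hα : 0 ≤ α) {x w : E} (h : 0 ≤ re ⟪x, w⟫_𝕜) :
    ‖(α : 𝕜) • x - w‖ ≤ ‖(α : 𝕜) • x + w‖ := by
  refine (pow_le_pow_iff_left₀ (norm_nonneg _) (norm_nonneg _) two_ne_zero).mp ?_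
  rw [norm_smul_add_sq]
  nlinarith

theorem norm_smul_sub_lt_norm_smul_add {α : ℝ} (hα : 0 < α) {x w : E} (h : 0 < re ⟪x, w⟫_𝕜) :
    ‖(α : 𝕜) • x - w‖ < ‖(α : 𝕜) • x + w‖ := by
  refine (pow_lt_pow_iff_left₀ (norm_nonneg _) (norm_nonneg _) two_ne_zero).mp ?_
  rw [norm_smul_add_sq]
  nlinarith

theorem smul_add_ne_zero_of_re_inner_nonneg {α : ℝ} (hα : 0 < α) {x w : E} (hx : x ≠ 0)
    (h : 0 ≤ re ⟪x, w⟫_𝕜) : (α : 𝕜) • x + w ≠ 0 := by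
  intro h0
  have : re ⟪x, (α : 𝕜) • x + w⟫_𝕜 = α * ‖x‖ ^ 2 + re ⟪x, w⟫_𝕜 := by
    rw [inner_add_right, inner_smul_right, inner_self_eq_norm_sq_to_K, ← ofReal_pow, map_add,
      re_ofReal_mul, ofReal_re]
  rw [h0, inner_zero_right, map_zero] at this
  nlinarith [mul_pos hα (pow_pos (norm_pos_iff.mpr hx) 2)]

theorem norm_lt_one_of_splitting_relations {f g : E →ₗ[𝕜] E}
    (hf : ∀ x ≠ 0, 0 < re ⟪x, f x⟫_𝕜) (hg : ∀ x, 0 ≤ re ⟪x, g x⟫_𝕜) {α : ℝ} (hα : 0 < α)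
    {μ : 𝕜} {v y : E} (hv : v ≠ 0)
    (hy : (α : 𝕜) • y + f y = (α : 𝕜) • v - g v)
    (hμ : (α : 𝕜) • y - f y = μ • ((α : 𝕜) • v + g v)) : ‖μ‖ < 1 := by
  have hp := smul_add_ne_zero_of_re_inner_nonneg hα hv (hg v)
  rcases eq_or_ne y 0 with rfl | hy0
  · rw [smul_zero, map_zero, sub_zero, eq_comm, smul_eq_zero] at hμ
    simp [hμ.resolve_right hp]
  · have key : ‖μ‖ * ‖(α : 𝕜) • v + g v‖ < ‖(α : 𝕜) • v + g v‖ := calc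
      ‖μ‖ * ‖(α : 𝕜) • v + g v‖ = ‖(α : 𝕜) • y - f y‖ := by rw [hμ, norm_smul]
      _ < ‖(α : 𝕜) • y + f y‖ := norm_smul_sub_lt_norm_smul_add hα (hf y hy0)
      _ = ‖(α : 𝕜) • v - g v‖ := by rw [hy]
      _ ≤ ‖(α : 𝕜) • v + g v‖ := norm_smul_sub_le_norm_smul_add hα.le (hg v)
    exact (mul_lt_iff_lt_one_left (norm_pos_iff.mpr hp)).mp key

end Accretive

section Complexification
variable {ι : Type*} [Fintype ι]

theorem dotProduct_mulVec_pos_of_posDef_add_transpose {A : Matrix ι ι ℝ} (hA : (A + Aᵀ).PosDef)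
    (v : ι → ℝ) (hv : v ≠ 0) : 0 < v ⬝ᵥ A *ᵥ v := by
  have h := hA.dotProduct_mulVec_pos hv
  rw [star_trivial, add_mulVec, dotProduct_add, dotProduct_transpose_mulVec] at h
  linarith

theorem dotProduct_mulVec_nonneg_of_forall_pos {M : Matrix ι ι ℝ}
    (hM : ∀ v ≠ 0, 0 < v ⬝ᵥ M *ᵥ v) (v : ι → ℝ) : 0 ≤ v ⬝ᵥ M *ᵥ v := by
  rcases eq_or_ne v 0 with rfl | hv
  · simp
  · exact (hM v hv).le

variable [DecidableEq ι]

theorem toEuclideanLin_map_smul_one_add_apply (M : Matrix ι ι ℝ) (α : ℝ)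
    (x : EuclideanSpace ℂ ι) :
    toEuclideanLin ((α • 1 + M).map (algebraMap ℝ ℂ)) x =
      (α : ℂ) • x + toEuclideanLin (M.map (algebraMap ℝ ℂ)) x := by
  simp [Matrix.map_add, Matrix.map_smul, ← Complex.coe_smul]

theorem toEuclideanLin_map_smul_one_sub_apply (M : Matrix ι ι ℝ) (α : ℝ)
    (x : EuclideanSpace ℂ ι) :
    toEuclideanLin ((α • 1 - M).map (algebraMap ℝ ℂ)) x =
      (α : ℂ) • x - toEuclideanLin (M.map (algebraMap ℝ ℂ)) x := by
  simp [Matrix.map_sub, Matrix.map_smul, ← Complex.coe_smul]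

theorem toEuclideanLin_map_mul_apply (X Y : Matrix ι ι ℝ) (x : EuclideanSpace ℂ ι) :
    toEuclideanLin ((X * Y).map (algebraMap ℝ ℂ)) x =
      toEuclideanLin (X.map (algebraMap ℝ ℂ)) (toEuclideanLin (Y.map (algebraMap ℝ ℂ)) x) := by
  rw [Matrix.map_mul, toLpLin_mul_same, LinearMap.comp_apply]

theorem re_inner_toEuclideanLin_map_algebraMap (M : Matrix ι ι ℝ) (x : EuclideanSpace ℂ ι) :
    re ⟪x, toEuclideanLin (M.map (algebraMap ℝ ℂ)) x⟫_ℂ =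
      (fun i ↦ (x i).re) ⬝ᵥ M *ᵥ (fun i ↦ (x i).re) +
        (fun i ↦ (x i).im) ⬝ᵥ M *ᵥ (fun i ↦ (x i).im) := by
  simp only [EuclideanSpace.inner_eq_star_dotProduct, toLpLin_apply, dotProduct, mulVec,
    Finset.sum_mul, RCLike.re_to_complex, Complex.re_sum, Finset.mul_sum, ← Finset.sum_add_distrib]
  refine Finset.sum_congr rfl fun i _ ↦ Finset.sum_congr rfl fun j _ ↦ ?_
  simp only [Complex.coe_algebraMap, Matrix.map_apply, Pi.star_apply, star_def, Complex.mul_re,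
    Complex.ofReal_re, Complex.ofReal_im, zero_mul, sub_zero, Complex.conj_re, Complex.mul_im,
    add_zero, Complex.conj_im, mul_neg, sub_neg_eq_add]
  ring

theorem re_inner_toEuclideanLin_map_algebraMap_nonneg {M : Matrix ι ι ℝ}
    (hM : ∀ v, 0 ≤ v ⬝ᵥ M *ᵥ v) (x : EuclideanSpace ℂ ι) :
    0 ≤ re ⟪x, toEuclideanLin (M.map (algebraMap ℝ ℂ)) x⟫_ℂ := by
  rw [re_inner_toEuclideanLin_map_algebraMap]
  exact add_nonneg (hM _) (hM _)

theorem re_inner_toEuclideanLin_map_algebraMap_pos {M : Matrix ι ι ℝ}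
    (hM : ∀ v ≠ 0, 0 < v ⬝ᵥ M *ᵥ v) (x : EuclideanSpace ℂ ι) (hx : x ≠ 0) :
    0 < re ⟪x, toEuclideanLin (M.map (algebraMap ℝ ℂ)) x⟫_ℂ := by
  have hM' := dotProduct_mulVec_nonneg_of_forall_pos hM
  rw [re_inner_toEuclideanLin_map_algebraMap]
  by_cases hre : (fun i ↦ (x i).re) = 0
  · have him : (fun i ↦ (x i).im) ≠ 0 := fun him ↦
      hx (PiLp.ext fun i ↦ Complex.ext (congrFun hre i) (congrFun him i))
    exact add_pos_of_nonneg_of_pos (hM' _) (hM _ him)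
  · exact add_pos_of_pos_of_nonneg (hM _ hre) (hM' _)

theorem isUnit_det_smul_one_add {M : Matrix ι ι ℝ} (hM : ∀ v, 0 ≤ v ⬝ᵥ M *ᵥ v) {α : ℝ}
    (hα : 0 < α) : IsUnit (α • 1 + M).det := by
  rw [isUnit_iff_ne_zero, Ne, ← exists_mulVec_eq_zero_iff]
  rintro ⟨v, hv, hMv⟩
  refine smul_add_ne_zero_of_re_inner_nonneg (𝕜 := ℝ) hα (x := toLp 2 v)
    (w := toEuclideanLin M (toLp 2 v)) (by simpa using hv) ?_ ?_
  · simpa [EuclideanSpace.inner_eq_star_dotProduct, toLpLin_apply, dotProduct_comm] using hM v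
  · simpa [add_mulVec, smul_mulVec, toLpLin_apply] using congrArg (toLp 2) hMv

end Complexification

theorem norm_lt_one_of_mem_spectrum_splitting {ι : Type*} [Fintype ι] [DecidableEq ι]
    {A S : Matrix ι ι ℝ} (hA : ∀ v ≠ 0, 0 < v ⬝ᵥ A *ᵥ v) (hS : ∀ v, 0 ≤ v ⬝ᵥ S *ᵥ v)
    {α : ℝ} (hα : 0 < α) {μ : ℂ}
    (hμ : μ ∈ spectrum ℂ (((α • 1 + S)⁻¹ * (α • 1 - A) * (α • 1 + A)⁻¹ * (α • 1 - S)).map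
      (algebraMap ℝ ℂ))) : ‖μ‖ < 1 := by
  set T := (α • 1 + S)⁻¹ * (α • 1 - A) * (α • 1 + A)⁻¹ * (α • 1 - S)
  set W := (α • 1 + A)⁻¹ * (α • 1 - S)
  have hPT : (α • 1 + S) * T = (α • 1 - A) * W := by
    simp only [T, W, Matrix.mul_assoc,
      mul_nonsing_inv_cancel_left _ _ (isUnit_det_smul_one_add hS hα)]
  have hQW : (α • 1 + A) * W = α • 1 - S := mul_nonsing_inv_cancel_left _ _
    (isUnit_det_smul_one_add (dotProduct_mulVec_nonneg_of_forall_pos hA) hα)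
  -- otherwise the rewrites with `toEuclideanLin_map_mul_apply` below also split the body of `T`
  clear_value T W
  rw [← spectrum_toLpLin 2, ← Module.End.hasEigenvalue_iff_mem_spectrum] at hμ
  obtain ⟨v, hv⟩ := hμ.exists_hasEigenvector
  refine norm_lt_one_of_splitting_relations (re_inner_toEuclideanLin_map_algebraMap_pos hA)
    (re_inner_toEuclideanLin_map_algebraMap_nonneg hS) hα hv.2
    (y := toEuclideanLin (W.map (algebraMap ℝ ℂ)) v) ?_ ?_
  · have := congrArg (fun M ↦ toEuclideanLin (M.map (algebraMap ℝ ℂ)) v) hQW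
    rwa [toEuclideanLin_map_mul_apply,
      toEuclideanLin_map_smul_one_add_apply, toEuclideanLin_map_smul_one_sub_apply] at this
  · have := congrArg (fun M ↦ toEuclideanLin (M.map (algebraMap ℝ ℂ)) v) hPT
    rw [toEuclideanLin_map_mul_apply, toEuclideanLin_map_mul_apply,
      toEuclideanLin_map_smul_one_add_apply, toEuclideanLin_map_smul_one_sub_apply,
      hv.apply_eq_smul, map_smul] at this
    rw [smul_add, smul_comm μ]
    exact this.symm

theorem stmt_4_general {n k : ℕ} (A : Matrix (Fin n) (Fin n) ℝ)
    (U : Matrix (Fin n) (Fin k) ℝ) (hA : (A + Aᵀ).PosDef)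
    (α γ : ℝ) (hα : 0 < α) (hγ : 0 < γ) :
    ∀ μ ∈ spectrum ℂ ((Titer A U α γ).map (algebraMap ℝ ℂ)), ‖μ‖ < 1 := by
  intro μ hμ
  have hS : (γ • (U * Uᵀ)).PosSemidef := by
    simpa using (posSemidef_self_mul_conjTranspose U).smul hγ.le
  exact norm_lt_one_of_mem_spectrum_splitting
    (dotProduct_mulVec_pos_of_posDef_add_transpose hA)
    (fun v ↦ by simpa using hS.dotProduct_mulVec_nonneg v) hα hμ

theorem stmt_4 {n k : ℕ} (hkn : k < n) (A : Matrix (Fin n) (Fin n) ℝ)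
    (U : Matrix (Fin n) (Fin k) ℝ) (hA : (A + Aᵀ).PosDef)
    (α γ : ℝ) (hα : 0 < α) (hγ : 0 < γ) :
    ∀ μ ∈ spectrum ℂ ((Titer A U α γ).map (algebraMap ℝ ℂ)), ‖μ‖ < 1 :=
  stmt_4_general A U hA α γ hα hγ
end

section
/- Eliminating the intermediate iterate from the alternating scheme yields the one-step iteration x^{(m+1)} = (I − P_α^{-1}A_γ)x^{(m)} + P_α^{-1}b, where P_α = (1/(2α))(A + αI)(αI + γUUᵀ); that is, the iteration matrix satisfies (αI + γUUᵀ)^{-1}(αI − A)(αI + A)^{-1}(αI − γUUᵀ) = I − P_α^{-1}(A + γUUᵀ). -/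
/-!
With `M = αI + A` and `N = αI + γUUᵀ` (invertible because `γUUᵀ` is positive semidefinite) one
has `P_α⁻¹ = 2α (MN)⁻¹`. Since `αI - A` commutes with `M⁻¹`, the iteration matrix equals
`(MN)⁻¹ (αI - A)(αI - γUUᵀ)`, and `(αI - A)(αI - γUUᵀ) = MN - 2α A_γ`.
-/

open Matrix

namespace Matrix

variable {m K : Type*} [Fintype m] [DecidableEq m] [Field K]

theorem smul_one_sub_mul_smul_one_sub (α : K) (A C : Matrix m m K) :
    (α • 1 - A) * (α • 1 - C) = (α • 1 + A) * (α • 1 + C) - (2 * α) • (A + C) := by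
  simp only [sub_mul, mul_sub, add_mul, mul_add, smul_mul, Matrix.mul_smul, one_mul, mul_one,
    two_mul, add_smul, smul_add]
  abel

theorem commute_smul_one_sub_inv_smul_one_add (α : K) (A : Matrix m m K)
    (hA : IsUnit (α • 1 + A)) : Commute (α • 1 - A) (α • 1 + A)⁻¹ := by
  obtain ⟨u, hu⟩ := hA
  rw [← hu, ← coe_units_inv]
  refine Commute.units_inv_right ?_
  rw [hu]
  change (α • 1 - A) * (α • 1 + A) = (α • 1 + A) * (α • 1 - A)
  simp only [sub_mul, mul_sub, add_mul, mul_add, smul_mul, Matrix.mul_smul, one_mul, mul_one]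
  abel

theorem inv_smul_of_ne_zero {c : K} (hc : c ≠ 0) {M : Matrix m m K} (hM : IsUnit M) :
    (c • M)⁻¹ = c⁻¹ • M⁻¹ := by
  refine inv_eq_left_inv ?_
  rw [smul_mul_smul_comm, inv_mul_cancel₀ hc, one_smul,
    nonsing_inv_mul _ ((isUnit_iff_isUnit_det M).mp hM)]

theorem alternating_iteration_matrix_eq {α : K} (hα : 2 * α ≠ 0) {A C : Matrix m m K}
    (hA : IsUnit (α • 1 + A)) (hC : IsUnit (α • 1 + C)) :
    (α • 1 + C)⁻¹ * ((α • 1 - A) * ((α • 1 + A)⁻¹ * (α • 1 - C))) =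
      1 - ((1 / (2 * α)) • ((A + α • 1) * (α • 1 + C)))⁻¹ * (A + C) := by
  set M := α • 1 + A
  set N := α • 1 + C
  have hMN : IsUnit (M * N) := hA.mul hC
  calc N⁻¹ * ((α • 1 - A) * (M⁻¹ * (α • 1 - C)))
      = (M * N)⁻¹ * ((α • 1 - A) * (α • 1 - C)) := by
        rw [mul_inv_rev, ← mul_assoc (α • 1 - A),
          (commute_smul_one_sub_inv_smul_one_add α A hA).eq, mul_assoc, mul_assoc]
    _ = (M * N)⁻¹ * (M * N) - (2 * α) • (M * N)⁻¹ * (A + C) := by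
        rw [smul_one_sub_mul_smul_one_sub, mul_sub, Matrix.mul_smul, smul_mul]
    _ = 1 - ((1 / (2 * α)) • ((A + α • 1) * N))⁻¹ * (A + C) := by
        rw [nonsing_inv_mul _ ((isUnit_iff_isUnit_det _).mp hMN), add_comm A (α • 1),
          inv_smul_of_ne_zero (one_div_ne_zero hα) hMN, one_div, inv_inv]

theorem posDef_smul_one_add_smul_mul_transpose {k : Type*} [Fintype k] {α γ : ℝ} (hα : 0 < α)
    (hγ : 0 ≤ γ) (U : Matrix m k ℝ) : (α • 1 + γ • (U * Uᵀ)).PosDef :=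
  (PosDef.one.smul hα).add_posSemidef <| by
    simpa using (posSemidef_self_mul_conjTranspose U).smul hγ

end Matrix

theorem stmt_8 {n k : ℕ} (A : Matrix (Fin n) (Fin n) ℝ)
    (U : Matrix (Fin n) (Fin k) ℝ) (α γ : ℝ) (hα : 0 < α) (hγ : 0 < γ)
    (hAinv : IsUnit (α • (1 : Matrix (Fin n) (Fin n) ℝ) + A))
    (Pα : Matrix (Fin n) (Fin n) ℝ)
    (hP : Pα = (1 / (2 * α)) • ((A + α • 1) * (α • 1 + γ • (U * Uᵀ)))) :
    (α • 1 + γ • (U * Uᵀ))⁻¹ * ((α • 1 - A) * ((α • 1 + A)⁻¹ *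
        (α • 1 - γ • (U * Uᵀ)))) =
      1 - Pα⁻¹ * (A + γ • (U * Uᵀ)) := by
  subst hP
  exact alternating_iteration_matrix_eq (by positivity) hAinv
    (posDef_smul_one_add_smul_mul_transpose hα hγ.le U).isUnit
end

section
/- Let A be singular with A + γUUᵀ nonsingular, and suppose (λ, x) is an eigenpair of P_α^{-1}(A + γUUᵀ) with x ∈ Ker(Aᵀ) and ‖x‖₂ = 1. Then Uᵀx ≠ 0 and λ = 2/(1 + α/(γ‖Uᵀx‖₂²)), which is real and independent of A. -/
/-!
Since `A + Aᵀ` is positive semidefinite, `Aᵀ x = 0` already forces `A x = 0`, so on `x` the matrix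
`A` disappears from `M = A + γ U Uᵀ` and from `P_α`: with `s = ‖Uᵀ x‖²` and `‖x‖ = 1` one gets
`xᵀ M x = γ s` and `xᵀ P_α x = (α + γ s) / 2`. Multiplying the eigen-equation by `P_α` (which is
invertible, both of its factors having positive definite symmetric part) gives `M x = λ P_α x`, and
pairing with `x` yields `γ s = λ (α + γ s) / 2`. Finally `s ≠ 0`, since otherwise `M x = 0` with
`M` invertible.
-/

open Matrix

namespace Matrix

section CommRing

variable {R : Type*} [CommRing R] {n m : Type*} [Fintype n] [Fintype m]

theorem dotProduct_transpose_mulVec_self (A : Matrix n n R) (v : n → R) :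
    v ⬝ᵥ (Aᵀ *ᵥ v) = v ⬝ᵥ (A *ᵥ v) := by
  rw [mulVec_transpose, dotProduct_comm, dotProduct_mulVec]

theorem dotProduct_mul_transpose_mulVec_self (U : Matrix n m R) (v : n → R) :
    v ⬝ᵥ ((U * Uᵀ) *ᵥ v) = (Uᵀ *ᵥ v) ⬝ᵥ (Uᵀ *ᵥ v) := by
  rw [← mulVec_mulVec, dotProduct_mulVec, ← mulVec_transpose]

theorem dotProduct_add_smul_mul_transpose_mulVec {A : Matrix n n R} (U : Matrix n m R) (γ : R)
    {x : n → R} (hx : A *ᵥ x = 0) :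
    x ⬝ᵥ ((A + γ • (U * Uᵀ)) *ᵥ x) = γ * ((Uᵀ *ᵥ x) ⬝ᵥ (Uᵀ *ᵥ x)) := by
  rw [add_mulVec, hx, zero_add, smul_mulVec, dotProduct_smul,
    dotProduct_mul_transpose_mulVec_self, smul_eq_mul]

variable [DecidableEq n]

theorem dotProduct_add_smul_one_mul_mulVec {A : Matrix n n R} {x : n → R} (hx : Aᵀ *ᵥ x = 0)
    (α : R) (B : Matrix n n R) : x ⬝ᵥ (((A + α • 1) * B) *ᵥ x) = α * (x ⬝ᵥ (B *ᵥ x)) := by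
  rw [← mulVec_mulVec, dotProduct_mulVec, ← mulVec_transpose, transpose_add, transpose_smul,
    transpose_one, add_mulVec, hx, zero_add, smul_mulVec, one_mulVec, smul_dotProduct, smul_eq_mul]

theorem dotProduct_smul_one_add_smul_mul_transpose_mulVec (U : Matrix n m R) (α γ : R)
    (x : n → R) : x ⬝ᵥ ((α • 1 + γ • (U * Uᵀ)) *ᵥ x) =
      α * (x ⬝ᵥ x) + γ * ((Uᵀ *ᵥ x) ⬝ᵥ (Uᵀ *ᵥ x)) := by
  rw [add_mulVec, dotProduct_add, smul_mulVec, smul_mulVec, one_mulVec, dotProduct_smul,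
    dotProduct_smul, dotProduct_mul_transpose_mulVec_self, smul_eq_mul, smul_eq_mul]

theorem mulVec_eq_smul_mulVec_of_nonsing_inv_mul {P M : Matrix n n R} (hP : IsUnit P)
    {x : n → R} {c : R} (h : (P⁻¹ * M) *ᵥ x = c • x) : M *ᵥ x = c • (P *ᵥ x) := by
  rw [← mulVec_smul, ← h, mulVec_mulVec, ← Matrix.mul_assoc,
    mul_nonsing_inv _ ((isUnit_iff_isUnit_det P).mp hP), Matrix.one_mul]

end CommRing

section Real

variable {n m : Type*} [Fintype n] [Fintype m]

theorem mulVec_eq_zero_of_transpose_mulVec_eq_zero {A : Matrix n n ℝ} (hA : (A + Aᵀ).PosSemidef)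
    {x : n → ℝ} (hx : Aᵀ *ᵥ x = 0) : A *ᵥ x = 0 := by
  have hquad : x ⬝ᵥ (A *ᵥ x) = 0 := by
    rw [← dotProduct_transpose_mulVec_self, hx, dotProduct_zero]
  have hsum : (A + Aᵀ) *ᵥ x = 0 := by
    rw [← hA.dotProduct_mulVec_zero_iff, star_trivial, add_mulVec, dotProduct_add, hquad, hx,
      dotProduct_zero, add_zero]
  rwa [add_mulVec, hx, add_zero] at hsum

variable [DecidableEq n]

theorem isUnit_of_posDef_add_transpose {A : Matrix n n ℝ} (hA : (A + Aᵀ).PosDef) : IsUnit A := by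
  rw [isUnit_iff_isUnit_det, isUnit_iff_ne_zero]
  intro hdet
  obtain ⟨v, hv, hAv⟩ := exists_mulVec_eq_zero_iff.mpr hdet
  have hpos := hA.dotProduct_mulVec_pos hv
  rw [star_trivial, add_mulVec, dotProduct_add, dotProduct_transpose_mulVec_self, hAv,
    dotProduct_zero, add_zero] at hpos
  exact hpos.false

theorem isUnit_add_smul_one {A : Matrix n n ℝ} (hA : (A + Aᵀ).PosSemidef) {α : ℝ} (hα : 0 < α) :
    IsUnit (A + α • 1) := by
  refine isUnit_of_posDef_add_transpose ?_
  have hsum : A + α • 1 + (A + α • 1)ᵀ = (2 * α) • (1 : Matrix n n ℝ) + (A + Aᵀ) := by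
    rw [transpose_add, transpose_smul, transpose_one, mul_smul, two_smul]
    abel
  rw [hsum]
  exact (PosDef.one.smul (by positivity)).add_posSemidef hA

theorem isUnit_smul_one_add_smul_mul_transpose (U : Matrix n m ℝ) {α γ : ℝ} (hα : 0 < α)
    (hγ : 0 ≤ γ) : IsUnit (α • 1 + γ • (U * Uᵀ)) :=
  ((PosDef.one.smul hα).add_posSemidef ((posSemidef_self_mul_conjTranspose U).smul hγ)).isUnit

end Real

end Matrix

theorem stmt_12_general {n k : ℕ} (A : Matrix (Fin n) (Fin n) ℝ)
    (U : Matrix (Fin n) (Fin k) ℝ) (hA : (A + Aᵀ).PosSemidef)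
    (α γ : ℝ) (hα : 0 < α) (hγ : 0 < γ)
    (hinv : IsUnit (A + γ • (U * Uᵀ)))
    (Pα : Matrix (Fin n) (Fin n) ℝ)
    (hP : Pα = (1 / (2 * α)) • ((A + α • 1) * (α • 1 + γ • (U * Uᵀ))))
    (lam : ℝ) (x : Fin n → ℝ) (hx : x ⬝ᵥ x = 1) (hkerAT : Aᵀ *ᵥ x = 0)
    (heig : (Pα⁻¹ * (A + γ • (U * Uᵀ))) *ᵥ x = lam • x) :
    Uᵀ *ᵥ x ≠ 0 ∧
      lam = 2 / (1 + α / (γ * ((Uᵀ *ᵥ x) ⬝ᵥ (Uᵀ *ᵥ x)))) := by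
  have hAx := mulVec_eq_zero_of_transpose_mulVec_eq_zero hA hkerAT
  have hUx : Uᵀ *ᵥ x ≠ 0 := by
    intro h0
    have hx0 : x = 0 := (mulVec_injective_iff_isUnit.mpr hinv) <| by
      rw [mulVec_zero, add_mulVec, hAx, zero_add, smul_mulVec, ← mulVec_mulVec, h0, mulVec_zero,
        smul_zero]
    simp [hx0] at hx
  have hPα : IsUnit Pα := hP ▸ IsUnit.smul (Units.mk0 (1 / (2 * α)) (by positivity))
    ((isUnit_add_smul_one hA hα).mul (isUnit_smul_one_add_smul_mul_transpose U hα hγ.le))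
  have hquad := congrArg (x ⬝ᵥ ·) (mulVec_eq_smul_mulVec_of_nonsing_inv_mul hPα heig)
  simp only [dotProduct_smul, smul_eq_mul, hP, smul_mulVec] at hquad
  rw [dotProduct_add_smul_mul_transpose_mulVec U γ hAx, dotProduct_add_smul_one_mul_mulVec hkerAT,
    dotProduct_smul_one_add_smul_mul_transpose_mulVec, hx] at hquad
  have hs : 0 < (Uᵀ *ᵥ x) ⬝ᵥ (Uᵀ *ᵥ x) :=
    (dotProduct_star_self_nonneg _).lt_of_ne' (dotProduct_self_eq_zero.not.mpr hUx)
  refine ⟨hUx, ?_⟩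
  field_simp at hquad ⊢
  linarith

theorem stmt_12 {n k : ℕ} (A : Matrix (Fin n) (Fin n) ℝ)
    (U : Matrix (Fin n) (Fin k) ℝ) (hA : (A + Aᵀ).PosSemidef)
    (hsing : ¬ IsUnit A) (α γ : ℝ) (hα : 0 < α) (hγ : 0 < γ)
    (hinv : IsUnit (A + γ • (U * Uᵀ)))
    (Pα : Matrix (Fin n) (Fin n) ℝ)
    (hP : Pα = (1 / (2 * α)) • ((A + α • 1) * (α • 1 + γ • (U * Uᵀ))))
    (lam : ℝ) (x : Fin n → ℝ) (hx : x ⬝ᵥ x = 1) (hkerAT : Aᵀ *ᵥ x = 0)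
    (heig : (Pα⁻¹ * (A + γ • (U * Uᵀ))) *ᵥ x = lam • x) :
    Uᵀ *ᵥ x ≠ 0 ∧
      lam = 2 / (1 + α / (γ * ((Uᵀ *ᵥ x) ⬝ᵥ (Uᵀ *ᵥ x)))) :=
  stmt_12_general A U hA α γ hα hγ hinv Pα hP lam x hx hkerAT heig
end
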